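/- Let m ≥ 1 and n_c ≥ 5 be integers and let a > 0. Every phase-cohesive equilibrium θ of the Kuramoto dynamics on the 1D honeycomb graph G(m, n_c) with identical natural frequencies and uniform coupling a — that is, every phase-cohesive θ ∈ ℝ^{m(n_c−1)+1} with Σ_{j : (i,j) edge} sin(θ_j − θ_i) = 0 for every vertex i — satisfies conditions (C1)–(C2) up to adjusting each coordinate by an integer multiple of 2π; equivalently, there exists an integer vector (k_0, ..., k_{m−1}) with |k_p| ≤ ⌈n_c/4⌉ − 1 such that along every edge of the p-th cycle the counterclockwise difference of θ equals 2π k_p / n_c. -/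

import Mathlib

/-- The counterclockwise difference: the unique element of `[-π, π)` congruent to `x`
modulo `2π`. -/
noncomputable def dcc (x : ℝ) : ℝ :=
  x - 2 * Real.pi * ((⌊(x + Real.pi) / (2 * Real.pi)⌋ : ℤ) : ℝ)

/-- Edge relation of the 1D honeycomb graph `G(m, n_c)` on vertices `{1, ..., m(n_c-1)+1}`. -/
def honEdge (m nc i j : ℕ) : Prop :=
  (1 ≤ i ∧ i ≤ m * (nc - 1) ∧ j = i + 1) ∨
  (1 ≤ j ∧ j ≤ m * (nc - 1) ∧ i = j + 1) ∨
  (∃ p, p < m ∧ ((i = p * (nc - 1) + 1 ∧ j = (p + 1) * (nc - 1) + 1) ∨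
                 (j = p * (nc - 1) + 1 ∧ i = (p + 1) * (nc - 1) + 1)))

open Classical in
/-- The Kuramoto coupling sum `Σ_{j : (i,j) edge} sin(θ_j - θ_i)` at vertex `i`. -/
noncomputable def couplingSum (m nc : ℕ) (θ : ℕ → ℝ) (i : ℕ) : ℝ :=
  ∑ j ∈ Finset.range (m * (nc - 1) + 2),
    if honEdge m nc i j then Real.sin (θ j - θ i) else 0


/-! At a vertex of degree two, the equilibrium equation says that the sines of the two incident
phase differences agree; since both differences lie in `(-π/2, π/2)`, where `sin` is injective,
the phase advances by one constant step `δ_p` along the whole path of cycle `p`. Conservation of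
the flow `sin δ_p - sin (θ_{v_p} - θ_{v_{p+1}})` through the junctions `v_p = p (n_c - 1) + 1`,
started at the leaf `v_0 = 1`, shows that the chord of cycle `p` carries the same step. Going once
around the cycle then gives `n_c δ_p ∈ 2πℤ`, and `|δ_p| < π/2` bounds the integer by `n_c/4`. -/

open Real

lemma exists_int_eq_dcc_add (x : ℝ) : ∃ t : ℤ, x = dcc x + 2 * π * t :=
  ⟨⌊(x + π) / (2 * π)⌋, by unfold dcc; ring⟩

lemma sin_dcc (x : ℝ) : sin (dcc x) = sin x := by
  obtain ⟨t, ht⟩ := exists_int_eq_dcc_add x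
  rw [eq_sub_of_add_eq ht.symm, mul_comm, sin_sub_int_mul_two_pi]

lemma dcc_eq_of_sin_eq {x y : ℝ} (hx : |dcc x| < π / 2) (hy : |dcc y| < π / 2)
    (h : sin x = sin y) : dcc x = dcc y := by
  rw [abs_lt] at hx hy
  refine injOn_sin ⟨hx.1.le, hx.2.le⟩ ⟨hy.1.le, hy.2.le⟩ ?_
  rwa [sin_dcc, sin_dcc]

lemma exists_int_sub_eq_mul_add_of_dcc_eq (θ : ℕ → ℝ) {δ : ℝ} {s : ℕ} :
    ∀ l, (∀ i, s ≤ i → i < s + l → dcc (θ (i + 1) - θ i) = δ) →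
      ∃ T : ℤ, θ (s + l) - θ s = l * δ + 2 * π * T
  | 0, _ => ⟨0, by simp⟩
  | l + 1, h => by
    obtain ⟨T, hT⟩ := exists_int_sub_eq_mul_add_of_dcc_eq θ l fun i h₁ h₂ => h i h₁ (by omega)
    obtain ⟨t, ht⟩ := exists_int_eq_dcc_add (θ (s + l + 1) - θ (s + l))
    rw [h (s + l) le_self_add (by omega)] at ht
    refine ⟨T + t, ?_⟩
    rw [← add_assoc]
    push_cast
    linarith

lemma abs_le_ceil_div_four_sub_one {n : ℕ} {K : ℤ} (hn : 0 < n)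
    (h : |2 * π * K / n| < π / 2) : |K| ≤ ⌈(n : ℚ) / 4⌉ - 1 := by
  have hnR : (0 : ℝ) < n := by exact_mod_cast hn
  rw [abs_div, abs_mul, abs_of_pos two_pi_pos, abs_of_pos hnR, div_lt_iff₀ hnR] at h
  have h4 : 4 * |K| < n := by
    have : 4 * |(K : ℝ)| < n := lt_of_mul_lt_mul_left (by linarith) pi_pos.le
    exact_mod_cast this
  have : |K| < ⌈(n : ℚ) / 4⌉ := by
    rw [Int.lt_ceil, lt_div_iff₀ (by norm_num)]
    exact_mod_cast (by omega : |K| * 4 < n)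
  omega

section Honeycomb

variable {m nc : ℕ}

lemma lt_of_honEdge {i j : ℕ} (h : honEdge m nc i j) : j < m * (nc - 1) + 2 := by
  rcases h with ⟨-, h, rfl⟩ | ⟨-, h, -⟩ | ⟨p, hp, ⟨-, rfl⟩ | ⟨rfl, -⟩⟩
  · omega
  · omega
  · have : (p + 1) * (nc - 1) ≤ m * (nc - 1) := Nat.mul_le_mul_right _ hp
    omega
  · have : p * (nc - 1) ≤ m * (nc - 1) := Nat.mul_le_mul_right _ hp.le
    omega

lemma couplingSum_eq_sum (θ : ℕ → ℝ) {i : ℕ} (s : Finset ℕ)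
    (hs : ∀ j, honEdge m nc i j ↔ j ∈ s) :
    couplingSum m nc θ i = ∑ j ∈ s, sin (θ j - θ i) := by
  classical
  rw [couplingSum, ← Finset.sum_filter]
  congr 1
  ext j
  rw [Finset.mem_filter, ← hs]
  exact ⟨And.right, fun h => ⟨Finset.mem_range.2 (lt_of_honEdge h), h⟩⟩

lemma honEdge_succ_iff_of_mem_path {p i : ℕ} (hp : p < m) (h₁ : p * (nc - 1) + 1 ≤ i)
    (h₂ : i + 1 ≤ (p + 1) * (nc - 1)) (j : ℕ) :
    honEdge m nc (i + 1) j ↔ j = i ∨ j = i + 2 := by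
  have hle : (p + 1) * (nc - 1) ≤ m * (nc - 1) := Nat.mul_le_mul_right _ hp
  have not_junction : ∀ q, i ≠ q * (nc - 1) := by
    rintro q rfl
    have := Nat.lt_of_mul_lt_mul_right (show p * (nc - 1) < q * (nc - 1) by omega)
    have := Nat.lt_of_mul_lt_mul_right (show q * (nc - 1) < (p + 1) * (nc - 1) by omega)
    omega
  constructor
  · rintro (⟨-, -, rfl⟩ | ⟨-, -, h⟩ | ⟨q, -, ⟨h, -⟩ | ⟨-, h⟩⟩)
    · exact .inr rfl
    · exact .inl (by omega)
    · exact absurd (by omega) (not_junction q)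
    · exact absurd (by omega) (not_junction (q + 1))
  · rintro (rfl | rfl)
    · exact .inr (.inl ⟨by omega, by omega, rfl⟩)
    · exact .inl ⟨by omega, by omega, rfl⟩

lemma honEdge_one_iff (hnc : 2 ≤ nc) (hm : 0 < m) (j : ℕ) :
    honEdge m nc 1 j ↔ j = 2 ∨ j = nc := by
  have hle : 1 * (nc - 1) ≤ m * (nc - 1) := Nat.mul_le_mul_right _ hm
  constructor
  · rintro (⟨-, -, rfl⟩ | ⟨h₁, -, h⟩ | ⟨q, -, ⟨h, rfl⟩ | ⟨-, h⟩⟩)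
    · exact .inl rfl
    · omega
    · obtain rfl : q = 0 := by
        by_contra hq
        have := Nat.le_mul_of_pos_left (nc - 1) (Nat.pos_of_ne_zero hq)
        omega
      exact .inr (by omega)
    · have : nc - 1 ≤ (q + 1) * (nc - 1) := Nat.le_mul_of_pos_left _ q.succ_pos
      omega
  · rintro (rfl | rfl)
    · exact .inl ⟨le_rfl, by omega, rfl⟩
    · exact .inr (.inr ⟨0, hm, .inl ⟨by simp, by omega⟩⟩)

lemma honEdge_junction_iff (hnc : 2 ≤ nc) {p : ℕ} (hp : p + 1 < m) (j : ℕ) :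
    honEdge m nc ((p + 1) * (nc - 1) + 1) j ↔
      j = (p + 1) * (nc - 1) ∨ j = (p + 1) * (nc - 1) + 2 ∨
        j = p * (nc - 1) + 1 ∨ j = (p + 2) * (nc - 1) + 1 := by
  have e₁ : (p + 1) * (nc - 1) = p * (nc - 1) + (nc - 1) := add_one_mul _ _
  have e₂ : (p + 2) * (nc - 1) = (p + 1) * (nc - 1) + (nc - 1) := add_one_mul _ _
  have hle : (p + 2) * (nc - 1) ≤ m * (nc - 1) := Nat.mul_le_mul_right _ hp
  have cancel : ∀ q, q * (nc - 1) = (p + 1) * (nc - 1) → q = p + 1 := fun q h =>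
    Nat.eq_of_mul_eq_mul_right (by omega) h
  constructor
  · rintro (⟨-, -, rfl⟩ | ⟨-, -, h⟩ | ⟨q, -, ⟨h, rfl⟩ | ⟨rfl, h⟩⟩)
    · exact .inr (.inl rfl)
    · exact .inl (by omega)
    · obtain rfl := cancel q (by omega)
      exact .inr (.inr (.inr rfl))
    · obtain rfl : q = p := by have := cancel (q + 1) (by omega); omega
      exact .inr (.inr (.inl rfl))
  · rintro (rfl | rfl | rfl | rfl)
    · exact .inr (.inl ⟨by omega, by omega, by omega⟩)
    · exact .inl ⟨by omega, by omega, rfl⟩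
    · exact .inr (.inr ⟨p, by omega, .inr ⟨rfl, rfl⟩⟩)
    · exact .inr (.inr ⟨p + 1, hp, .inl ⟨rfl, rfl⟩⟩)

lemma couplingSum_succ_of_mem_path (θ : ℕ → ℝ) {p i : ℕ} (hp : p < m)
    (h₁ : p * (nc - 1) + 1 ≤ i) (h₂ : i + 1 ≤ (p + 1) * (nc - 1)) :
    couplingSum m nc θ (i + 1) = sin (θ i - θ (i + 1)) + sin (θ (i + 2) - θ (i + 1)) := by
  rw [couplingSum_eq_sum θ {i, i + 2} fun j => (honEdge_succ_iff_of_mem_path hp h₁ h₂ j).trans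
    (by simp), Finset.sum_pair (by omega)]

lemma couplingSum_one (θ : ℕ → ℝ) (hnc : 3 ≤ nc) (hm : 0 < m) :
    couplingSum m nc θ 1 = sin (θ 2 - θ 1) + sin (θ nc - θ 1) := by
  rw [couplingSum_eq_sum θ {2, nc} fun j => (honEdge_one_iff (by omega) hm j).trans (by simp),
    Finset.sum_pair (by omega)]

lemma couplingSum_junction (θ : ℕ → ℝ) (hnc : 3 ≤ nc) {p : ℕ} (hp : p + 1 < m) :
    couplingSum m nc θ ((p + 1) * (nc - 1) + 1) =
      sin (θ ((p + 1) * (nc - 1)) - θ ((p + 1) * (nc - 1) + 1)) +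
        (sin (θ ((p + 1) * (nc - 1) + 2) - θ ((p + 1) * (nc - 1) + 1)) +
          (sin (θ (p * (nc - 1) + 1) - θ ((p + 1) * (nc - 1) + 1)) +
            sin (θ ((p + 2) * (nc - 1) + 1) - θ ((p + 1) * (nc - 1) + 1)))) := by
  have e₁ : (p + 1) * (nc - 1) = p * (nc - 1) + (nc - 1) := add_one_mul _ _
  have e₂ : (p + 2) * (nc - 1) = (p + 1) * (nc - 1) + (nc - 1) := add_one_mul _ _
  rw [couplingSum_eq_sum θ
      {(p + 1) * (nc - 1), (p + 1) * (nc - 1) + 2, p * (nc - 1) + 1, (p + 2) * (nc - 1) + 1}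
      fun j => (honEdge_junction_iff (by omega) hp j).trans (by simp),
    Finset.sum_insert (by simp only [Finset.mem_insert, Finset.mem_singleton]; omega),
    Finset.sum_insert (by simp only [Finset.mem_insert, Finset.mem_singleton]; omega),
    Finset.sum_pair (by omega)]

end Honeycomb

def IsPhaseCohesive (m nc : ℕ) (θ : ℕ → ℝ) : Prop :=
  ∀ i j, honEdge m nc i j → |dcc (θ i - θ j)| < π / 2

def IsEquilibrium (m nc : ℕ) (θ : ℕ → ℝ) : Prop :=
  ∀ i, 1 ≤ i → i ≤ m * (nc - 1) + 1 → couplingSum m nc θ i = 0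

noncomputable def cycleStep (nc : ℕ) (θ : ℕ → ℝ) (p : ℕ) : ℝ :=
  dcc (θ (p * (nc - 1) + 2) - θ (p * (nc - 1) + 1))

section Equilibrium

variable {m nc : ℕ} {θ : ℕ → ℝ}

lemma IsPhaseCohesive.abs_dcc_succ_sub_lt (hcoh : IsPhaseCohesive m nc θ) {i : ℕ} (h₁ : 1 ≤ i)
    (h₂ : i ≤ m * (nc - 1)) : |dcc (θ (i + 1) - θ i)| < π / 2 :=
  hcoh _ _ (.inr (.inl ⟨h₁, h₂, rfl⟩))

lemma IsPhaseCohesive.abs_cycleStep_lt (hcoh : IsPhaseCohesive m nc θ) (hnc : 2 ≤ nc) {p : ℕ}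
    (hp : p < m) : |cycleStep nc θ p| < π / 2 := by
  have hle : (p + 1) * (nc - 1) ≤ m * (nc - 1) := Nat.mul_le_mul_right _ hp
  have e₁ : (p + 1) * (nc - 1) = p * (nc - 1) + (nc - 1) := add_one_mul _ _
  exact hcoh.abs_dcc_succ_sub_lt (by omega) (by omega)

lemma IsEquilibrium.sin_succ_sub_eq (heq : IsEquilibrium m nc θ) {p i : ℕ} (hp : p < m)
    (h₁ : p * (nc - 1) + 1 ≤ i) (h₂ : i + 1 ≤ (p + 1) * (nc - 1)) :
    sin (θ (i + 2) - θ (i + 1)) = sin (θ (i + 1) - θ i) := by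
  have hle : (p + 1) * (nc - 1) ≤ m * (nc - 1) := Nat.mul_le_mul_right _ hp
  have h := heq (i + 1) (by omega) (by omega)
  rw [couplingSum_succ_of_mem_path θ hp h₁ h₂, ← neg_sub (θ (i + 1)) (θ i), sin_neg] at h
  linarith

lemma dcc_succ_sub_eq_cycleStep (hcoh : IsPhaseCohesive m nc θ) (heq : IsEquilibrium m nc θ)
    {p i : ℕ} (hp : p < m) (h₁ : p * (nc - 1) + 1 ≤ i) (h₂ : i ≤ (p + 1) * (nc - 1)) :
    dcc (θ (i + 1) - θ i) = cycleStep nc θ p := by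
  have hle : (p + 1) * (nc - 1) ≤ m * (nc - 1) := Nat.mul_le_mul_right _ hp
  induction i, h₁ using Nat.le_induction with
  | base => rfl
  | succ i hi ih =>
    rw [← ih (by omega)]
    exact dcc_eq_of_sin_eq (hcoh.abs_dcc_succ_sub_lt (by omega) (by omega))
      (hcoh.abs_dcc_succ_sub_lt (by omega) (by omega)) (heq.sin_succ_sub_eq hp hi h₂)

/-- The flow `sin δ_p - sin (θ_{v_p} - θ_{v_{p+1}})` that `v_p` sends into cycle `p` equals the
flow that cycle `p - 1` delivers to `v_p`, and it vanishes at the leaf `v_0`. -/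
lemma sin_cycleStep_eq_sin_chord (hnc : 3 ≤ nc) (hcoh : IsPhaseCohesive m nc θ)
    (heq : IsEquilibrium m nc θ) :
    ∀ {p : ℕ}, p < m →
      sin (cycleStep nc θ p) = sin (θ (p * (nc - 1) + 1) - θ ((p + 1) * (nc - 1) + 1))
  | 0, hm => by
    have h := heq 1 le_rfl (by omega)
    rw [couplingSum_one θ hnc hm] at h
    rw [cycleStep, sin_dcc]
    simp only [zero_mul, zero_add, one_mul]
    rw [Nat.sub_add_cancel (by omega), ← neg_sub (θ nc), sin_neg]
    linarith
  | p + 1, hp => by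
    have e₁ : (p + 1) * (nc - 1) = p * (nc - 1) + (nc - 1) := add_one_mul _ _
    have e₂ : (p + 2) * (nc - 1) = (p + 1) * (nc - 1) + (nc - 1) := add_one_mul _ _
    have hle : (p + 2) * (nc - 1) ≤ m * (nc - 1) := Nat.mul_le_mul_right _ hp
    have h := heq ((p + 1) * (nc - 1) + 1) (by omega) (by omega)
    rw [couplingSum_junction θ hnc hp] at h
    have ih := sin_cycleStep_eq_sin_chord hnc hcoh heq (p := p) (by omega)
    have h_in : sin (θ ((p + 1) * (nc - 1)) - θ ((p + 1) * (nc - 1) + 1)) =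
        -sin (cycleStep nc θ p) := by
      rw [← dcc_succ_sub_eq_cycleStep hcoh heq (p := p) (by omega) (by omega) le_rfl, sin_dcc,
        ← sin_neg, neg_sub]
    rw [cycleStep, sin_dcc, show p + 1 + 1 = p + 2 from rfl,
      ← neg_sub (θ ((p + 2) * (nc - 1) + 1)), sin_neg]
    linarith

lemma dcc_chord_eq_cycleStep (hnc : 3 ≤ nc) (hcoh : IsPhaseCohesive m nc θ)
    (heq : IsEquilibrium m nc θ) {p : ℕ} (hp : p < m) :
    dcc (θ (p * (nc - 1) + 1) - θ ((p + 1) * (nc - 1) + 1)) = cycleStep nc θ p :=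
  dcc_eq_of_sin_eq (hcoh _ _ (.inr (.inr ⟨p, hp, .inl ⟨rfl, rfl⟩⟩)))
    (hcoh.abs_cycleStep_lt (by omega) hp) ((sin_cycleStep_eq_sin_chord hnc hcoh heq hp).symm.trans
      (sin_dcc _))

lemma exists_cycleStep_eq (hnc : 3 ≤ nc) (hcoh : IsPhaseCohesive m nc θ)
    (heq : IsEquilibrium m nc θ) {p : ℕ} (hp : p < m) :
    ∃ K : ℤ, cycleStep nc θ p = 2 * π * K / nc := by
  have e₁ : (p + 1) * (nc - 1) = p * (nc - 1) + (nc - 1) := add_one_mul _ _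
  obtain ⟨T, hT⟩ := exists_int_sub_eq_mul_add_of_dcc_eq θ (s := p * (nc - 1) + 1) (nc - 1)
    fun i h₁ h₂ => dcc_succ_sub_eq_cycleStep hcoh heq hp h₁ (by omega)
  obtain ⟨F, hF⟩ := exists_int_eq_dcc_add (θ (p * (nc - 1) + 1) - θ ((p + 1) * (nc - 1) + 1))
  rw [dcc_chord_eq_cycleStep hnc hcoh heq hp] at hF
  rw [show p * (nc - 1) + 1 + (nc - 1) = (p + 1) * (nc - 1) + 1 by omega,
    Nat.cast_sub (by omega), Nat.cast_one] at hT
  refine ⟨-(T + F), ?_⟩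
  rw [eq_div_iff (Nat.cast_ne_zero.2 (by omega))]
  push_cast
  linarith

end Equilibrium

theorem phase_cohesive_equilibria_are_C1C2_general (m nc : ℕ) (hnc : 5 ≤ nc) (θ : ℕ → ℝ)
    (hcoh : ∀ i j, honEdge m nc i j → |dcc (θ i - θ j)| < Real.pi / 2)
    (heq : ∀ i, 1 ≤ i → i ≤ m * (nc - 1) + 1 → couplingSum m nc θ i = 0) :
    ∃ k : ℕ → ℤ,
      (∀ p, p < m → |k p| ≤ ⌈(nc : ℚ) / 4⌉ - 1) ∧
      (∀ p, p < m → ∀ i, p * (nc - 1) + 1 ≤ i → i ≤ (p + 1) * (nc - 1) →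
        dcc (θ (i + 1) - θ i) = 2 * Real.pi * (k p : ℝ) / (nc : ℝ)) ∧
      (∀ p, p < m →
        dcc (θ (p * (nc - 1) + 1) - θ ((p + 1) * (nc - 1) + 1)) =
          2 * Real.pi * (k p : ℝ) / (nc : ℝ)) := by
  have hnc₃ : 3 ≤ nc := by omega
  choose! k hk using fun p (hp : p < m) => exists_cycleStep_eq hnc₃ hcoh heq hp
  refine ⟨k, fun p hp => ?_, fun p hp i h₁ h₂ => ?_, fun p hp => ?_⟩
  · exact abs_le_ceil_div_four_sub_one (by omega)
      (hk p hp ▸ IsPhaseCohesive.abs_cycleStep_lt hcoh (by omega) hp)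
  · rw [dcc_succ_sub_eq_cycleStep hcoh heq hp h₁ h₂, hk p hp]
  · rw [dcc_chord_eq_cycleStep hnc₃ hcoh heq hp, hk p hp]

/-- every phase-cohesive equilibrium of the Kuramoto dynamics on the 1D
honeycomb graph `G(m, n_c)` (identical natural frequencies, uniform coupling `a > 0`)
satisfies conditions (C1)–(C2) up to integer multiples of `2π`: there is an integer
vector `(k_0, ..., k_{m-1})` with `|k_p| ≤ ⌈n_c/4⌉ - 1` such that along every edge of
the `p`-th cycle the counterclockwise difference of `θ` equals `2π k_p / n_c`. -/
theorem phase_cohesive_equilibria_are_C1C2 (m nc : ℕ) (hm : 1 ≤ m) (hnc : 5 ≤ nc)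
    (a : ℝ) (ha : 0 < a) (θ : ℕ → ℝ)
    (hcoh : ∀ i j, honEdge m nc i j → |dcc (θ i - θ j)| < Real.pi / 2)
    (heq : ∀ i, 1 ≤ i → i ≤ m * (nc - 1) + 1 → couplingSum m nc θ i = 0) :
    ∃ k : ℕ → ℤ,
      (∀ p, p < m → |k p| ≤ ⌈(nc : ℚ) / 4⌉ - 1) ∧
      (∀ p, p < m → ∀ i, p * (nc - 1) + 1 ≤ i → i ≤ (p + 1) * (nc - 1) →
        dcc (θ (i + 1) - θ i) = 2 * Real.pi * (k p : ℝ) / (nc : ℝ)) ∧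
      (∀ p, p < m →
        dcc (θ (p * (nc - 1) + 1) - θ ((p + 1) * (nc - 1) + 1)) =
          2 * Real.pi * (k p : ℝ) / (nc : ℝ)) :=
  phase_cohesive_equilibria_are_C1C2_general m nc hnc θ hcoh heq
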